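/- arXiv:2202.07877 — 5 statements merged into one kernel-verified Lean document; each statement's English description precedes it below -/
import Mathlib

section
/- If v and w are adjacent vertices that both have degree exactly 2 in a graph G with at least 5 vertices, then v is essential in G, i.e., at most one of G \ v, G*v \ v, G/v is prime. -/
variable {V : Type*}

/-- A split of a simple graph. -/
def IsSplit (G : SimpleGraph V) (A B : Set V) : Prop :=
  A ∪ B = Set.univ ∧ Disjoint A B ∧ 2 ≤ A.ncard ∧ 2 ≤ B.ncard ∧
    ∃ A' B', A' ⊆ A ∧ B' ⊆ B ∧ ∀ x ∈ A, ∀ y ∈ B, (G.Adj x y ↔ (x ∈ A' ∧ y ∈ B'))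

/-- A graph is prime if it has no split. -/
def IsPrime (G : SimpleGraph V) : Prop := ¬ ∃ A B : Set V, IsSplit G A B

/-- Local complementation at a vertex. -/
def localComp (G : SimpleGraph V) (v : V) : SimpleGraph V where
  Adj x y := x ≠ y ∧ Xor' (G.Adj x y) (G.Adj v x ∧ G.Adj v y)
  symm := by
    constructor
    intro x y h
    refine ⟨h.1.symm, ?_⟩
    rw [SimpleGraph.adj_comm, and_comm]
    exact h.2
  loopless := by constructor; intro x h; exact h.1 rfl

/-- Pivoting an edge: G ∧ vw = G*v*w*v. -/
def pivot (G : SimpleGraph V) (v w : V) : SimpleGraph V :=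
  localComp (localComp (localComp G v) w) v

/-- Vertex deletion. -/
def deleteVert (G : SimpleGraph V) (v : V) : SimpleGraph {x : V // x ≠ v} :=
  G.induce {x | x ≠ v}

/-- Two vertices are twins if every other vertex is adjacent to one iff to the other. -/
def Twins (G : SimpleGraph V) (u w : V) : Prop :=
  ∀ x, x ≠ u → x ≠ w → (G.Adj x u ↔ G.Adj x w)


/-! Let `a` and `b` be the neighbours of `v` and `w` other than `w` and `v`. In `G \ v` the only
neighbour of `w` is `b`; pivoting on `vw` hands `w` the neighbourhood of `v`, so in `(G ∧ vw) \ v`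
the only neighbour of `w` is `a`. A vertex with at most one neighbour `q` forms with `q` one side of
a split once four vertices remain, so neither of these two graphs is prime. -/

theorem Nat.card_subtype_ne {α : Type*} [Finite α] (a : α) :
    Nat.card {x // x ≠ a} = Nat.card α - 1 := by
  have h := Set.ncard_add_ncard_compl {a}
  rw [Set.ncard_singleton] at h
  exact (Nat.card_coe_set_eq ({a}ᶜ : Set α)).trans (by omega)

theorem SimpleGraph.exists_neighborSet_eq_pair {G : SimpleGraph V} {v w : V} (hvw : G.Adj v w)
    (hv : (G.neighborSet v).ncard = 2) : ∃ a, a ≠ w ∧ G.neighborSet v = {w, a} := by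
  obtain ⟨x, y, hxy, hN⟩ := Set.ncard_eq_two.mp hv
  have hw : w ∈ ({x, y} : Set V) := hN ▸ hvw
  rcases hw with rfl | rfl
  · exact ⟨y, hxy.symm, hN⟩
  · exact ⟨x, hxy, hN.trans (Set.pair_comm _ _)⟩

theorem not_isPrime_of_neighborSet_subset_singleton [Finite V] {H : SimpleGraph V}
    (hcard : 4 ≤ Nat.card V) {p q : V} (hpq : p ≠ q) (hp : H.neighborSet p ⊆ {q}) :
    ¬ IsPrime H := by
  have hcompl := Set.ncard_add_ncard_compl {p, q}
  rw [Set.ncard_pair hpq] at hcompl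
  refine not_not.mpr ⟨{p, q}, {p, q}ᶜ, Set.union_compl_self _, disjoint_compl_right,
    (Set.ncard_pair hpq).ge, by omega, {q}, {p, q}ᶜ ∩ H.neighborSet q, by simp,
    Set.inter_subset_left, ?_⟩
  rintro x (rfl | rfl) y hy
  · have hyq : y ≠ q := fun h => hy (Or.inr h)
    simpa [hpq] using fun hxy => hyq (hp hxy)
  · simp [hy]

theorem not_isPrime_deleteVert_of_neighborSet_subset_pair [Finite V] {H : SimpleGraph V}
    (hcard : 5 ≤ Nat.card V) {v p q : V} (hpv : p ≠ v) (hqv : q ≠ v) (hpq : p ≠ q)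
    (hp : H.neighborSet p ⊆ {v, q}) : ¬ IsPrime (deleteVert H v) := by
  refine not_isPrime_of_neighborSet_subset_singleton (p := ⟨p, hpv⟩) (q := ⟨q, hqv⟩)
    (by rw [Nat.card_subtype_ne]; omega) (by simpa using hpq) fun x hx => ?_
  have : (x : V) ∈ ({v, q} : Set V) := hp hx
  simpa [x.2, Subtype.ext_iff] using this

@[simp]
theorem localComp_adj {G : SimpleGraph V} {v x y : V} :
    (localComp G v).Adj x y ↔ x ≠ y ∧ Xor (G.Adj x y) (G.Adj v x ∧ G.Adj v y) :=
  Iff.rfl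

theorem pivot_adj_left {G : SimpleGraph V} {v w x : V} (hvw : G.Adj v w) (hxv : x ≠ v)
    (hxw : x ≠ w) : (pivot G v w).Adj w x ↔ G.Adj v x := by
  by_cases hv : G.Adj v x <;> by_cases hw : G.Adj w x <;>
    simp [pivot, hvw, hvw.symm, hvw.ne, hvw.ne.symm, hxv.symm, hxw.symm, hv, hw]

/-- If v and w are adjacent vertices both of degree exactly 2 in a graph G
with at least 5 vertices, then v is essential: at most one of G∖v, G*v∖v, G/v is prime.
Here G/v is computed by pivoting the edge vw and deleting v. -/
theorem essential_of_adj_degree_two {V : Type*} [Finite V] (G : SimpleGraph V)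
    (hcard : 5 ≤ Nat.card V) (v w : V) (hadj : G.Adj v w)
    (hv : (G.neighborSet v).ncard = 2) (hw : (G.neighborSet w).ncard = 2) :
    ¬ ((IsPrime (deleteVert G v) ∧ IsPrime (deleteVert (localComp G v) v)) ∨
       (IsPrime (deleteVert G v) ∧ IsPrime (deleteVert (pivot G v w) v)) ∨
       (IsPrime (deleteVert (localComp G v) v) ∧ IsPrime (deleteVert (pivot G v w) v))) := by
  obtain ⟨a, haw, hNv⟩ := G.exists_neighborSet_eq_pair hadj hv
  obtain ⟨b, hbv, hNw⟩ := G.exists_neighborSet_eq_pair hadj.symm hw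
  have hva : G.Adj v a := by simp [← SimpleGraph.mem_neighborSet, hNv]
  have hwb : G.Adj w b := by simp [← SimpleGraph.mem_neighborSet, hNw]
  have hG : ¬ IsPrime (deleteVert G v) :=
    not_isPrime_deleteVert_of_neighborSet_subset_pair hcard hadj.ne' hbv hwb.ne hNw.le
  have hP : ¬ IsPrime (deleteVert (pivot G v w) v) := by
    refine not_isPrime_deleteVert_of_neighborSet_subset_pair hcard hadj.ne' hva.ne' haw.symm
      fun x hx => ?_
    by_cases hxv : x = v
    · exact Or.inl hxv
    · have hxw : x ≠ w := ((pivot G v w).ne_of_adj hx).symm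
      have hx' : x ∈ G.neighborSet v := (pivot_adj_left hadj hxv hxw).mp hx
      rw [hNv] at hx'
      exact Or.inr (hx'.resolve_left hxw)
  tauto
end

section
/- A 2-connected outerplanar graph with at least 5 vertices is prime. Consequently, an outerplanar graph with at least 5 vertices is prime if and only if it is 2-connected. -/
variable {V : Type*}

/-- A graph is outerplanar iff it admits a one-page book embedding: a linear order of
the vertices in which no two edges cross. -/
def Outerplanar {V : Type*} (G : SimpleGraph V) : Prop :=
  ∃ f : V → ℕ, Function.Injective f ∧
    ∀ a b c d, G.Adj a b → G.Adj c d → f a < f c → f c < f b → f b < f d → False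

/-- A graph is 2-connected if it has at least 3 vertices and deleting any vertex leaves
a connected graph. -/
def TwoConnected {V : Type*} (G : SimpleGraph V) : Prop :=
  3 ≤ Nat.card V ∧ ∀ v : V, (G.induce {x | x ≠ v}).Connected

/-!
If `G - v` falls apart into sides `S` and `T` with `|T| ≥ 2`, then `(S ∪ {v}, T)` is a split
with frontiers `{v}` and `N(v) ∩ T`; with at least five vertices one of the two sides has two
vertices, so a prime graph is 2-connected.

Conversely, let `(A, B)` be a split of a 2-connected graph with frontiers `A' ⊆ A`, `B' ⊆ B`.
If `A'` had at most one vertex `v`, then `v` would separate `A \ {v}` from `B`; so both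
frontiers contain two vertices, and `a₁ b₁ a₂ b₂` is a 4-cycle. In a one-page book embedding
its vertices alternate, `a₁ < b₁ < a₂ < b₂`, and a fifth vertex lies on one of the four arcs
between consecutive ones. Since edges do not cross, that arc is attached to the rest of the
graph only at its end vertices `α ∈ A'` and `β ∈ B'`, and it contains no frontier vertex. Its
vertices in `B` can then leave it only through `β`, and those in `A` only through `α`,
contradicting 2-connectivity.
-/

namespace SimpleGraph

variable {G : SimpleGraph V}

theorem not_connected_induce_ne_of_closed {v a b : V} (S : Set V) (ha : a ∈ S) (hav : a ≠ v)
    (hb : b ∉ S) (hbv : b ≠ v) (hS : ∀ x ∈ S, G.neighborSet x ⊆ insert v S) :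
    ¬ (G.induce {x | x ≠ v}).Connected := fun hconn => by
  obtain ⟨d, -, hd, hd'⟩ := (hconn.preconnected ⟨a, hav⟩ ⟨b, hbv⟩).some.exists_boundary_dart
    {x | x.1 ∈ S} ha hb
  exact d.snd.2 (((hS _ hd) d.adj).resolve_right hd')

end SimpleGraph

open SimpleGraph

section CutVertex

open Set

variable {G : SimpleGraph V}

theorem exists_separation_of_not_connected {v : V} (hne : ∃ x, x ≠ v)
    (h : ¬ (G.induce {x | x ≠ v}).Connected) :
    ∃ S T : Set V, S ∪ T = {v}ᶜ ∧ Disjoint S T ∧ S.Nonempty ∧ T.Nonempty ∧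
      ∀ x ∈ S, ∀ y ∈ T, ¬ G.Adj x y := by
  obtain ⟨u, hu⟩ := hne
  have : Nonempty {x | x ≠ v} := ⟨⟨u, hu⟩⟩
  obtain ⟨a, b, hab⟩ : ∃ a b, ¬ (G.induce {x | x ≠ v}).Reachable a b := by
    by_contra! hall
    exact h ⟨hall⟩
  let S : Set V := {x | ∃ hx : x ≠ v, (G.induce {x | x ≠ v}).Reachable a ⟨x, hx⟩}
  refine ⟨S, {v}ᶜ \ S, union_sdiff_cancel fun x hx => hx.1, disjoint_sdiff_right,
    ⟨a, a.2, .refl _⟩, ⟨b, b.2, fun ⟨_, hr⟩ => hab hr⟩, ?_⟩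
  rintro x ⟨hxv, hr⟩ y ⟨hyv, hyS⟩ hxy
  exact hyS ⟨hyv, hr.trans (Adj.reachable (G := G.induce {x | x ≠ v}) hxy)⟩

theorem isSplit_insert_of_separation [Finite V] {v : V} {S T : Set V} (hST : S ∪ T = {v}ᶜ)
    (hdisj : Disjoint S T) (hS : S.Nonempty) (hT : 2 ≤ T.ncard)
    (hsep : ∀ x ∈ S, ∀ y ∈ T, ¬ G.Adj x y) : IsSplit G (insert v S) T := by
  have hvS : v ∉ S := fun hv => (hST.subset (Or.inl hv) : v ≠ v) rfl
  have hvT : v ∉ T := fun hv => (hST.subset (Or.inr hv) : v ≠ v) rfl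
  refine ⟨by rw [insert_union, hST, insert_eq, union_compl_self],
    disjoint_insert_left.mpr ⟨hvT, hdisj⟩, ?_, hT, {v}, T ∩ G.neighborSet v, by simp,
    inter_subset_left, ?_⟩
  · rw [ncard_insert_of_notMem hvS]
    have := hS.ncard_pos
    omega
  · rintro x (rfl | hx) y hy
    · simp [hy]
    · simp [hsep x hx y hy, ne_of_mem_of_not_mem hx hvS]

theorem exists_isSplit_of_not_twoConnected [Finite V] (hcard : 5 ≤ Nat.card V)
    (h : ¬ TwoConnected G) : ∃ A B, IsSplit G A B := by
  obtain ⟨v, hv⟩ : ∃ v, ¬ (G.induce {x | x ≠ v}).Connected := by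
    simpa [TwoConnected, show 3 ≤ Nat.card V by omega] using h
  have : Nontrivial V := Finite.one_lt_card_iff_nontrivial.mp (by omega)
  obtain ⟨S, T, hST, hdisj, hS, hT, hsep⟩ := exists_separation_of_not_connected (exists_ne v) hv
  have hsize : S.ncard + T.ncard + 1 = Nat.card V := by
    rw [← ncard_union_eq hdisj, hST, ← ncard_singleton v, add_comm, ncard_add_ncard_compl]
  by_cases hT2 : 2 ≤ T.ncard
  · exact ⟨_, _, isSplit_insert_of_separation hST hdisj hS hT2 hsep⟩
  · have := hT.ncard_pos
    exact ⟨_, _, isSplit_insert_of_separation (union_comm S T ▸ hST) hdisj.symm hT (by omega)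
      fun x hx y hy hxy => hsep y hy x hx hxy.symm⟩

end CutVertex

structure IsSplitFrontier (G : SimpleGraph V) (A B A' B' : Set V) : Prop where
  union_eq : A ∪ B = Set.univ
  disjoint : Disjoint A B
  left_subset : A' ⊆ A
  right_subset : B' ⊆ B
  adj_iff : ∀ x ∈ A, ∀ y ∈ B, G.Adj x y ↔ x ∈ A' ∧ y ∈ B'

namespace IsSplitFrontier

variable {G : SimpleGraph V} {A B A' B' : Set V}

theorem symm (h : IsSplitFrontier G A B A' B') : IsSplitFrontier G B A B' A' where
  union_eq := Set.union_comm A B ▸ h.union_eq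
  disjoint := h.disjoint.symm
  left_subset := h.right_subset
  right_subset := h.left_subset
  adj_iff x hx y hy := by rw [G.adj_comm, h.adj_iff y hy x hx, and_comm]

theorem mem_or_mem (h : IsSplitFrontier G A B A' B') (x : V) : x ∈ A ∨ x ∈ B :=
  Set.eq_univ_iff_forall.mp h.union_eq x

theorem ne (h : IsSplitFrontier G A B A' B') {x y : V} (hx : x ∈ A) (hy : y ∈ B) : x ≠ y :=
  h.disjoint.ne_of_mem hx hy

theorem adj (h : IsSplitFrontier G A B A' B') {x y : V} (hx : x ∈ A') (hy : y ∈ B') :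
    G.Adj x y :=
  (h.adj_iff x (h.left_subset hx) y (h.right_subset hy)).mpr ⟨hx, hy⟩

theorem mem_of_adj (h : IsSplitFrontier G A B A' B') {x y : V} (hx : x ∈ A) (hy : y ∈ B)
    (hxy : G.Adj x y) : x ∈ A' ∧ y ∈ B' :=
  (h.adj_iff x hx y hy).mp hxy

theorem nontrivial_left (h : IsSplitFrontier G A B A' B')
    (hconn : ∀ v, (G.induce {x | x ≠ v}).Connected) (hA : A.Nontrivial) (hB : B.Nonempty) :
    A'.Nontrivial := by
  by_contra hA'
  obtain ⟨v, hvA, hA'v⟩ : ∃ v ∈ A, A' ⊆ {v} := by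
    rcases (Set.not_nontrivial_iff.mp hA').eq_empty_or_singleton with hempty | ⟨v, rfl⟩
    · obtain ⟨v, hv⟩ := hA.nonempty
      exact ⟨v, hv, hempty ▸ Set.empty_subset _⟩
    · exact ⟨v, h.left_subset rfl, subset_rfl⟩
  obtain ⟨a, haA, hav⟩ := hA.exists_ne v
  obtain ⟨b, hbB⟩ := hB
  refine not_connected_induce_ne_of_closed (A \ {v}) ⟨haA, hav⟩ hav
    (fun hb => h.ne hb.1 hbB rfl) (h.ne hvA hbB).symm ?_ (hconn v)
  rintro x ⟨hxA, hxv⟩ y hxy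
  rcases h.mem_or_mem y with hyA | hyB
  · exact (eq_or_ne y v).imp id fun hyv => ⟨hyA, hyv⟩
  · exact absurd (hA'v (h.mem_of_adj hxA hyB hxy).1) hxv

theorem not_connected_of_closed (h : IsSplitFrontier G A B A' B') {α β w : V} {I : Set V}
    (hα : α ∈ A') (hβ : β ∈ B') (hIA' : Disjoint I A') (hIB' : Disjoint I B')
    (hI : ∀ x ∈ I, G.neighborSet x ⊆ I ∪ {α, β}) (hw : w ∈ I) (hwB : w ∈ B) :
    ¬ (G.induce {x | x ≠ β}).Connected := by
  refine not_connected_induce_ne_of_closed (I ∩ B) ⟨hw, hwB⟩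
    (hIB'.ne_of_mem hw hβ) (fun hα' => h.ne (h.left_subset hα) hα'.2 rfl)
    (h.ne (h.left_subset hα) (h.right_subset hβ)) ?_
  rintro x ⟨hxI, hxB⟩ y hxy
  rcases hI x hxI hxy with hyI | rfl | rfl
  · rcases h.mem_or_mem y with hyA | hyB
    · exact absurd (h.mem_of_adj hyA hxB hxy.symm).1 (hIA'.notMem_of_mem_left hyI)
    · exact Or.inr ⟨hyI, hyB⟩
  · exact absurd (h.mem_of_adj (h.left_subset hα) hxB hxy.symm).2 (hIB'.notMem_of_mem_left hxI)
  · exact Or.inl rfl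

theorem disjoint_right_of_closed (h : IsSplitFrontier G A B A' B') {a₁ a₂ α β : V} {I : Set V}
    (ha₁ : a₁ ∈ A') (ha₂ : a₂ ∈ A') (ha : a₁ ≠ a₂) (ha₁I : a₁ ∉ I) (ha₂I : a₂ ∉ I) (hβ : β ∈ B)
    (hI : ∀ x ∈ I, G.neighborSet x ⊆ I ∪ {α, β}) : Disjoint I B' := by
  refine Set.disjoint_left.mpr fun w hwI hwB' => ha ?_
  have eq_α : ∀ a ∈ A', a ∉ I → a = α := fun a haA' haI => by
    rcases hI w hwI (h.adj haA' hwB').symm with haI' | rfl | rfl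
    · exact absurd haI' haI
    · rfl
    · exact absurd rfl (h.ne (h.left_subset haA') hβ)
  rw [eq_α a₁ ha₁ ha₁I, eq_α a₂ ha₂ ha₂I]

theorem exists_not_connected_of_closed (h : IsSplitFrontier G A B A' B')
    {a₁ a₂ b₁ b₂ α β : V} {I : Set V} (ha₁ : a₁ ∈ A') (ha₂ : a₂ ∈ A') (hb₁ : b₁ ∈ B')
    (hb₂ : b₂ ∈ B') (ha : a₁ ≠ a₂) (hb : b₁ ≠ b₂) (hα : α ∈ A') (hβ : β ∈ B')
    (hI : ∀ x ∈ I, G.neighborSet x ⊆ I ∪ {α, β}) (hne : I.Nonempty) (ha₁I : a₁ ∉ I)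
    (ha₂I : a₂ ∉ I) (hb₁I : b₁ ∉ I) (hb₂I : b₂ ∉ I) :
    ∃ v, ¬ (G.induce {x | x ≠ v}).Connected := by
  have hIA' := h.symm.disjoint_right_of_closed hb₁ hb₂ hb hb₁I hb₂I (h.left_subset hα)
    (Set.pair_comm α β ▸ hI)
  have hIB' := h.disjoint_right_of_closed ha₁ ha₂ ha ha₁I ha₂I (h.right_subset hβ) hI
  obtain ⟨w, hw⟩ := hne
  rcases h.mem_or_mem w with hwA | hwB
  · exact ⟨α, h.symm.not_connected_of_closed hβ hα hIB' hIA' (Set.pair_comm α β ▸ hI) hw hwA⟩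
  · exact ⟨β, h.not_connected_of_closed hα hβ hIA' hIB' hI hw hwB⟩

end IsSplitFrontier

theorem Function.Injective.mem_Ioo_or_eq_or_eq {α : Type*} [PartialOrder α] {f : V → α}
    (hf : Function.Injective f) {p q y : V} (hy : f y ∈ Set.Icc (f p) (f q)) :
    f y ∈ Set.Ioo (f p) (f q) ∨ y = p ∨ y = q := by
  rcases eq_or_lt_of_le hy.1 with hp | hp
  · exact Or.inr (Or.inl (hf hp.symm))
  rcases eq_or_lt_of_le hy.2 with hq | hq
  · exact Or.inr (Or.inr (hf hq))
  · exact Or.inl ⟨hp, hq⟩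

structure IsBookEmbedding (G : SimpleGraph V) (f : V → ℕ) : Prop where
  injective : Function.Injective f
  not_cross : ∀ a b c d, G.Adj a b → G.Adj c d → f a < f c → f c < f b → f b < f d → False

namespace IsBookEmbedding

open Set

variable {G : SimpleGraph V} {f : V → ℕ}

theorem mem_Icc_of_adj (hf : IsBookEmbedding G f) {p q w y : V} (hpq : G.Adj p q)
    (hw : f w ∈ Ioo (f p) (f q)) (hwy : G.Adj w y) : f y ∈ Icc (f p) (f q) := by
  by_contra hy
  rw [mem_Icc, not_and_or, not_le, not_le] at hy
  rcases hy with hy | hy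
  · exact hf.not_cross y w p q hwy.symm hpq hy hw.1 hw.2
  · exact hf.not_cross p q w y hpq hwy hw.1 hw.2 hy

theorem neighborSet_subset_preimage_Ioo (hf : IsBookEmbedding G f) {p q : V}
    (hpq : G.Adj p q) :
    ∀ w ∈ f ⁻¹' Ioo (f p) (f q), G.neighborSet w ⊆ f ⁻¹' Ioo (f p) (f q) ∪ {p, q} :=
  fun _ hw _ hwy => hf.injective.mem_Ioo_or_eq_or_eq (hf.mem_Icc_of_adj hpq hw hwy)

theorem neighborSet_subset_preimage_compl_Icc (hf : IsBookEmbedding G f) {p q : V}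
    (hpq : G.Adj p q) :
    ∀ w ∈ f ⁻¹' (Icc (f p) (f q))ᶜ, G.neighborSet w ⊆ f ⁻¹' (Icc (f p) (f q))ᶜ ∪ {p, q} := by
  intro w hw y hwy
  by_cases hy : f y ∈ Icc (f p) (f q)
  · rcases hf.injective.mem_Ioo_or_eq_or_eq hy with hy | hy
    · exact absurd (hf.mem_Icc_of_adj hpq hy hwy.symm) hw
    · exact Or.inr hy
  · exact Or.inl hy

theorem interleaved_of_adj (hf : IsBookEmbedding G f) {a₁ a₂ b₁ b₂ : V} (h₁₁ : G.Adj a₁ b₁)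
    (h₁₂ : G.Adj a₁ b₂) (h₂₁ : G.Adj a₂ b₁) (h₂₂ : G.Adj a₂ b₂) (ha : f a₁ < f a₂)
    (hb : f b₁ < f b₂) (hab : f a₁ < f b₁) : f b₁ < f a₂ ∧ f a₂ < f b₂ := by
  have hne₁ : f a₂ ≠ f b₁ := hf.injective.ne h₂₁.ne
  have hne₂ : f a₂ ≠ f b₂ := hf.injective.ne h₂₂.ne
  constructor
  · by_contra! h
    exact hf.not_cross a₁ b₁ a₂ b₂ h₁₁ h₂₂ ha (lt_of_le_of_ne h hne₁) hb
  · by_contra! h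
    exact hf.not_cross a₁ b₂ b₁ a₂ h₁₂ h₂₁.symm hab hb (lt_of_le_of_ne h hne₂.symm)

variable {A B A' B' : Set V}

theorem exists_not_connected_of_interleaved [Finite V] (hf : IsBookEmbedding G f)
    (hcard : 5 ≤ Nat.card V) (h : IsSplitFrontier G A B A' B') {a₁ a₂ b₁ b₂ : V}
    (ha₁ : a₁ ∈ A') (ha₂ : a₂ ∈ A') (hb₁ : b₁ ∈ B') (hb₂ : b₂ ∈ B') (h₁ : f a₁ < f b₁)
    (h₂ : f b₁ < f a₂) (h₃ : f a₂ < f b₂) : ∃ v, ¬ (G.induce {x | x ≠ v}).Connected := by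
  classical
  have := Fintype.ofFinite V
  obtain ⟨z, -, hz⟩ := Finset.exists_mem_notMem_of_card_lt_card (s := {a₁, b₁, a₂, b₂})
    (t := Finset.univ) (Finset.card_le_four.trans_lt (by
      rwa [Finset.card_univ, ← Nat.card_eq_fintype_card]))
  simp only [Finset.mem_insert, Finset.mem_singleton, not_or] at hz
  have hz' : f z ≠ f a₁ ∧ f z ≠ f b₁ ∧ f z ≠ f a₂ ∧ f z ≠ f b₂ := by
    simpa only [hf.injective.ne_iff] using hz
  have ha : a₁ ≠ a₂ := ne_of_apply_ne f (by omega)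
  have hb : b₁ ≠ b₂ := ne_of_apply_ne f (by omega)
  rcases (by omega : (f z < f a₁ ∨ f b₂ < f z) ∨ (f a₁ < f z ∧ f z < f b₁) ∨
      (f b₁ < f z ∧ f z < f a₂) ∨ (f a₂ < f z ∧ f z < f b₂)) with hz | hz | hz | hz
  · refine h.exists_not_connected_of_closed ha₁ ha₂ hb₁ hb₂ ha hb ha₁ hb₂
      (hf.neighborSet_subset_preimage_compl_Icc (h.adj ha₁ hb₂)) ⟨z, ?_⟩ ?_ ?_ ?_ ?_ <;>
      simp only [mem_preimage, mem_compl_iff, mem_Icc] <;> omega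
  · refine h.exists_not_connected_of_closed ha₁ ha₂ hb₁ hb₂ ha hb ha₁ hb₁
      (hf.neighborSet_subset_preimage_Ioo (h.adj ha₁ hb₁)) ⟨z, ?_⟩ ?_ ?_ ?_ ?_ <;>
      simp only [mem_preimage, mem_Ioo] <;> omega
  · refine h.exists_not_connected_of_closed ha₁ ha₂ hb₁ hb₂ ha hb ha₂ hb₁
      (pair_comm b₁ a₂ ▸ hf.neighborSet_subset_preimage_Ioo (h.adj ha₂ hb₁).symm)
      ⟨z, ?_⟩ ?_ ?_ ?_ ?_ <;> simp only [mem_preimage, mem_Ioo] <;> omega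
  · refine h.exists_not_connected_of_closed ha₁ ha₂ hb₁ hb₂ ha hb ha₂ hb₂
      (hf.neighborSet_subset_preimage_Ioo (h.adj ha₂ hb₂)) ⟨z, ?_⟩ ?_ ?_ ?_ ?_ <;>
      simp only [mem_preimage, mem_Ioo] <;> omega

theorem exists_not_connected_of_nontrivial [Finite V] (hf : IsBookEmbedding G f)
    (hcard : 5 ≤ Nat.card V) (h : IsSplitFrontier G A B A' B') (hA' : A'.Nontrivial)
    (hB' : B'.Nontrivial) : ∃ v, ¬ (G.induce {x | x ≠ v}).Connected := by
  obtain ⟨_, ⟨a₁, ha₁, rfl⟩, _, ⟨a₂, ha₂, rfl⟩, ha⟩ := (hA'.image hf.injective).exists_lt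
  obtain ⟨_, ⟨b₁, hb₁, rfl⟩, _, ⟨b₂, hb₂, rfl⟩, hb⟩ := (hB'.image hf.injective).exists_lt
  rcases lt_or_gt_of_ne (hf.injective.ne (h.ne (h.left_subset ha₁) (h.right_subset hb₁)))
    with hab | hba
  · obtain ⟨h₂, h₃⟩ := hf.interleaved_of_adj (h.adj ha₁ hb₁) (h.adj ha₁ hb₂) (h.adj ha₂ hb₁)
      (h.adj ha₂ hb₂) ha hb hab
    exact hf.exists_not_connected_of_interleaved hcard h ha₁ ha₂ hb₁ hb₂ hab h₂ h₃
  · have h' := h.symm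
    obtain ⟨h₂, h₃⟩ := hf.interleaved_of_adj (h'.adj hb₁ ha₁) (h'.adj hb₁ ha₂) (h'.adj hb₂ ha₁)
      (h'.adj hb₂ ha₂) hb ha hba
    exact hf.exists_not_connected_of_interleaved hcard h' hb₁ hb₂ ha₁ ha₂ hba h₂ h₃

theorem isPrime [Finite V] (hf : IsBookEmbedding G f) (hcard : 5 ≤ Nat.card V)
    (hconn : ∀ v, (G.induce {x | x ≠ v}).Connected) : IsPrime G := by
  rintro ⟨A, B, hAB, hdisj, hA, hB, A', B', hA'A, hB'B, hadj⟩
  have h : IsSplitFrontier G A B A' B' := ⟨hAB, hdisj, hA'A, hB'B, hadj⟩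
  replace hA : A.Nontrivial := Set.one_lt_ncard_iff_nontrivial.mp hA
  replace hB : B.Nontrivial := Set.one_lt_ncard_iff_nontrivial.mp hB
  obtain ⟨v, hv⟩ := hf.exists_not_connected_of_nontrivial hcard h
    (h.nontrivial_left hconn hA hB.nonempty) (h.symm.nontrivial_left hconn hB hA.nonempty)
  exact hv (hconn v)

end IsBookEmbedding

/-- An outerplanar graph with at least 5 vertices is prime iff it is
2-connected (in particular every 2-connected outerplanar graph with ≥ 5 vertices is prime). -/
theorem outerplanar_prime_iff_twoConnected {V : Type*} [Finite V] (G : SimpleGraph V)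
    (hcard : 5 ≤ Nat.card V) (hout : Outerplanar G) :
    IsPrime G ↔ TwoConnected G := by
  obtain ⟨f, hf, hcross⟩ := hout
  refine ⟨fun hprime => ?_, fun hconn => IsBookEmbedding.isPrime ⟨hf, hcross⟩ hcard hconn.2⟩
  by_contra h
  exact hprime (exists_isSplit_of_not_twoConnected hcard h)
end

section
/- Let G be a graph whose vertex set is partitioned into disjoint sets W, V_1, ..., V_r with r ≥ 2 and |V_i| ≥ 2 for all i. If the induced subgraph G[W ∪ V_i ∪ V_j] is prime for all distinct i and j, then G is prime. -/
/-!
A split `(A, B)` of `G` restricts to a split of `G[X]` as soon as both `A ∩ X` and `B ∩ X` have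
at least two vertices, so it suffices to find `i ≠ j` such that `W ∪ V_i ∪ V_j` meets each side of
the split twice. Counting the vertices of each side in `W` and in every `V_i` turns this into
arithmetic. If some `V_k` lies inside `B`, pair it with a part `V_j` such that `W ∪ V_j` meets `A`
twice; if there is none, `A` misses `W` and meets two parts `V_i`, `V_j` exactly once each, and
since `|V_i|, |V_j| ≥ 2` these meet `B` too. If every part meets both sides, any two parts will do.
-/

variable {V : Type*}

theorem Set.ncard_le_ncard_inter_add_ncard_inter {A B : Set V} (h : A ∪ B = Set.univ)
    (S : Set V) : S.ncard ≤ (A ∩ S).ncard + (B ∩ S).ncard := by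
  conv_lhs => rw [← Set.univ_inter S, ← h, Set.union_inter_distrib_right]
  exact Set.ncard_union_le _ _

theorem Set.ncard_le_ncard_inter_add_sum {ι : Type*} [Fintype ι] {W : Set V} {P : ι → Set V}
    (h : W ∪ ⋃ i, P i = Set.univ) (S : Set V) :
    S.ncard ≤ (S ∩ W).ncard + ∑ i, (S ∩ P i).ncard := by
  conv_lhs => rw [← Set.inter_univ S, ← h, Set.inter_union_distrib_left, Set.inter_iUnion]
  exact (Set.ncard_union_le _ _).trans (Nat.add_le_add_left (Set.ncard_iUnion_le_of_fintype _) _)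

theorem Set.ncard_inter_union [Finite V] (S : Set V) {T U : Set V} (h : Disjoint T U) :
    (S ∩ (T ∪ U)).ncard = (S ∩ T).ncard + (S ∩ U).ncard := by
  rw [Set.inter_union_distrib_left,
    Set.ncard_union_eq (h.mono Set.inter_subset_right Set.inter_subset_right)]

theorem IsSplit.induce {G : SimpleGraph V} {A B : Set V} (h : IsSplit G A B) {X : Set V}
    (hA : 2 ≤ (A ∩ X).ncard) (hB : 2 ≤ (B ∩ X).ncard) :
    IsSplit (G.induce X) (Subtype.val ⁻¹' A) (Subtype.val ⁻¹' B) := by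
  obtain ⟨hunion, hdisj, -, -, A', B', hA', hB', hadj⟩ := h
  refine ⟨?_, hdisj.preimage _, ?_, ?_, Subtype.val ⁻¹' A', Subtype.val ⁻¹' B',
    Set.preimage_mono hA', Set.preimage_mono hB', fun x hx y hy => hadj x hx y hy⟩
  · rw [← Set.preimage_union, hunion, Set.preimage_univ]
  · exact hA.trans_eq (Set.ncard_subtype (· ∈ X) A).symm
  · exact hB.trans_eq (Set.ncard_subtype (· ∈ X) B).symm

section Counting

variable {ι : Type*} [Fintype ι] [Nontrivial ι] (aW bW : ℕ) (a b : ι → ℕ)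

theorem exists_ne_two_le_add_add_of_eq_zero (hab : ∀ i, 2 ≤ a i + b i)
    (hA : 2 ≤ aW + ∑ i, a i) {k : ι} (hk : a k = 0) :
    ∃ i j, i ≠ j ∧ 2 ≤ aW + a i + a j ∧ 2 ≤ bW + b i + b j := by
  by_cases hpartner : ∃ j ≠ k, 2 ≤ aW + a j
  · obtain ⟨j, hjk, hj⟩ := hpartner
    exact ⟨k, j, hjk.symm, by omega, by have := hab k; omega⟩
  push Not at hpartner
  have hle : ∀ j, aW + a j ≤ 1 := by
    intro j
    rcases eq_or_ne j k with rfl | hjk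
    · obtain ⟨j₀, hj₀⟩ := exists_ne j
      have := hpartner j₀ hj₀
      omega
    · exact Nat.le_of_lt_succ (hpartner j hjk)
  have haW : aW = 0 := by
    by_contra haW
    have hsum : ∑ i, a i = 0 := Finset.sum_eq_zero fun i _ => by have := hle i; omega
    have := hle k
    omega
  have hsupport : 2 ≤ (Finset.univ.filter (a · ≠ 0)).card :=
    calc 2 ≤ ∑ i, a i := by omega
      _ = ∑ i ∈ Finset.univ.filter (a · ≠ 0), a i := (Finset.sum_filter_ne_zero _).symm
      _ ≤ (Finset.univ.filter (a · ≠ 0)).card • 1 :=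
        Finset.sum_le_card_nsmul _ _ _ fun i _ => by have := hle i; omega
      _ = _ := by rw [smul_eq_mul, mul_one]
  obtain ⟨i, hi, j, hj, hij⟩ := Finset.one_lt_card.mp hsupport
  simp only [Finset.mem_filter, Finset.mem_univ, true_and] at hi hj
  have := hab i; have := hab j; have := hle i; have := hle j
  exact ⟨i, j, hij, by omega, by omega⟩

theorem exists_ne_two_le_add_add (hab : ∀ i, 2 ≤ a i + b i)
    (hA : 2 ≤ aW + ∑ i, a i) (hB : 2 ≤ bW + ∑ i, b i) :
    ∃ i j, i ≠ j ∧ 2 ≤ aW + a i + a j ∧ 2 ≤ bW + b i + b j := by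
  by_cases ha : ∃ k, a k = 0
  · obtain ⟨k, hk⟩ := ha
    exact exists_ne_two_le_add_add_of_eq_zero aW bW a b hab hA hk
  by_cases hb : ∃ k, b k = 0
  · obtain ⟨k, hk⟩ := hb
    obtain ⟨i, j, hij, hbij, haij⟩ := exists_ne_two_le_add_add_of_eq_zero bW aW b a
      (fun i => (hab i).trans_eq (add_comm _ _)) hB hk
    exact ⟨i, j, hij, haij, hbij⟩
  push Not at ha hb
  obtain ⟨i, j, hij⟩ := exists_pair_ne ι
  have := ha i; have := ha j; have := hb i; have := hb j
  exact ⟨i, j, hij, by omega, by omega⟩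

end Counting

/-- If the vertex set of G is partitioned into W, V_1, …, V_r with r ≥ 2 and
|V_i| ≥ 2 for all i, and G[W ∪ V_i ∪ V_j] is prime for all distinct i, j, then G is prime. -/
theorem prime_of_prime_parts {V : Type*} [Finite V] (G : SimpleGraph V)
    (r : ℕ) (hr : 2 ≤ r) (W : Set V) (P : Fin r → Set V)
    (hWP : ∀ i, Disjoint W (P i)) (hPP : Pairwise (Function.onFun Disjoint P))
    (hcover : W ∪ (⋃ i, P i) = Set.univ)
    (hcard : ∀ i, 2 ≤ (P i).ncard)
    (hprime : ∀ i j, i ≠ j → IsPrime (G.induce (W ∪ P i ∪ P j))) :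
    IsPrime G := by
  have : Nontrivial (Fin r) := Fin.nontrivial_iff_two_le.mpr hr
  rintro ⟨A, B, hsplit⟩
  obtain ⟨hAB, -, hA, hB, -⟩ := id hsplit
  obtain ⟨i, j, hij, hAij, hBij⟩ := exists_ne_two_le_add_add (A ∩ W).ncard (B ∩ W).ncard
    (fun i => (A ∩ P i).ncard) (fun i => (B ∩ P i).ncard)
    (fun i => (hcard i).trans (Set.ncard_le_ncard_inter_add_ncard_inter hAB (P i)))
    (hA.trans (Set.ncard_le_ncard_inter_add_sum hcover A))
    (hB.trans (Set.ncard_le_ncard_inter_add_sum hcover B))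
  have hcount (S : Set V) :
      (S ∩ (W ∪ P i ∪ P j)).ncard = (S ∩ W).ncard + (S ∩ P i).ncard + (S ∩ P j).ncard := by
    rw [Set.ncard_inter_union _ (Set.disjoint_union_left.mpr ⟨hWP j, hPP hij⟩),
      Set.ncard_inter_union _ (hWP i)]
  exact hprime i j hij
    ⟨_, _, hsplit.induce ((hcount A).symm ▸ hAij) ((hcount B).symm ▸ hBij)⟩
end

section
/- If G is a graph with at least 5 vertices and v is a vertex of G of degree at least 2 such that G \ v is prime and v has no twin in G, then G is prime. -/
variable {V : Type*}

lemma isSplit_symm {G : SimpleGraph V} {A B : Set V} (h : IsSplit G A B) : IsSplit G B A := by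
  obtain ⟨hu, hd, hA, hB, A', B', hA', hB', hadj⟩ := h
  refine ⟨by rw [Set.union_comm]; exact hu, hd.symm, hB, hA, B', A', hB', hA', ?_⟩
  intro x hx y hy
  rw [SimpleGraph.adj_comm, hadj y hy x hx, and_comm]

lemma not_prime_of_isolated {W : Type*} [Finite W] (H : SimpleGraph W) (u : W)
    (hiso : ∀ y, ¬ H.Adj u y) (hcard : 4 ≤ Nat.card W) : ¬ IsPrime H := by
  intro hp
  have h1 : 1 < Nat.card W := by omega
  have : Nontrivial W := Finite.one_lt_card_iff_nontrivial.mp h1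
  obtain ⟨w, hw⟩ := exists_ne u
  apply hp
  refine ⟨{u, w}, {u, w}ᶜ, by simp, disjoint_compl_right, ?_, ?_, {w},
    {y | y ∈ ({u, w} : Set W)ᶜ ∧ H.Adj w y}, by simp, fun y hy => hy.1, ?_⟩
  · rw [Set.ncard_pair (Ne.symm hw)]
  · have := Set.ncard_add_ncard_compl ({u, w} : Set W)
    rw [Set.ncard_pair (Ne.symm hw)] at this
    omega
  · intro x hx y hy
    rcases hx with rfl | rfl
    · simp only [Set.mem_singleton_iff]
      constructor
      · intro h; exact absurd h (hiso y)
      · rintro ⟨rfl, -⟩; exact absurd rfl hw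
    · simp only [Set.mem_singleton_iff, Set.mem_setOf_eq]
      constructor
      · intro h; exact ⟨by trivial, hy, h⟩
      · rintro ⟨-, -, h⟩; exact h

lemma no_split_v_mem {V : Type*} [Finite V] (G : SimpleGraph V)
    (hcard : 5 ≤ Nat.card V) (v : V) (hdeg : 2 ≤ (G.neighborSet v).ncard)
    (hdel : IsPrime (deleteVert G v))
    (htwin : ∀ u, u ≠ v → ¬ Twins G v u)
    (A B : Set V) (hs : IsSplit G A B) (hvA : v ∈ A) : False := by
  obtain ⟨hu, hd, hA2, hB2, A', B', hA', hB', hadj⟩ := hs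
  have hvB : v ∉ B := fun h => (hd.ne_of_mem hvA h) rfl
  have hfin : ∀ s : Set V, s.Finite := fun s => s.toFinite
  -- membership dichotomy
  have hmem : ∀ x : V, x ∈ A ∨ x ∈ B := by
    intro x
    have : x ∈ A ∪ B := by rw [hu]; trivial
    exact this
  by_cases hA1 : 2 ≤ (A \ {v}).ncard
  · -- split of G \ v
    apply hdel
    refine ⟨{x | ↑x ∈ A}, {x | ↑x ∈ B}, ?_, ?_, ?_, ?_, {x | ↑x ∈ A'}, {x | ↑x ∈ B'},
      fun x hx => hA' hx, fun x hx => hB' hx, ?_⟩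
    · ext x; simpa using hmem ↑x
    · rw [Set.disjoint_left]
      intro x hx hx'
      exact (hd.ne_of_mem hx hx') rfl
    · have : Subtype.val '' {x : {x : V // x ≠ v} | ↑x ∈ A} = A \ {v} := by
        ext y
        simp only [Set.mem_image, Set.mem_setOf_eq, Set.mem_diff, Set.mem_singleton_iff]
        constructor
        · rintro ⟨⟨z, hz⟩, hz2, rfl⟩; exact ⟨hz2, hz⟩
        · rintro ⟨hy, hy2⟩; exact ⟨⟨y, hy2⟩, hy, rfl⟩
      have h2 := Set.ncard_image_of_injective {x : {x : V // x ≠ v} | ↑x ∈ A} Subtype.val_injective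
      rw [this] at h2
      omega
    · have : Subtype.val '' {x : {x : V // x ≠ v} | ↑x ∈ B} = B := by
        ext y
        simp only [Set.mem_image, Set.mem_setOf_eq]
        constructor
        · rintro ⟨⟨z, hz⟩, hz2, rfl⟩; exact hz2
        · intro hy; exact ⟨⟨y, fun h => hvB (h ▸ hy)⟩, hy, rfl⟩
      have h2 := Set.ncard_image_of_injective {x : {x : V // x ≠ v} | ↑x ∈ B} Subtype.val_injective
      rw [this] at h2
      omega
    · intro x hx y hy
      have : (deleteVert G v).Adj x y ↔ G.Adj ↑x ↑y := by
        simp [deleteVert]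
      rw [this]
      exact hadj ↑x hx ↑y hy
  · -- A = {v, u}
    have hvd : (A \ {v}).ncard = A.ncard - 1 := by
      rw [Set.ncard_diff_singleton_of_mem hvA]
    have h1 : (A \ {v}).ncard = 1 := by omega
    obtain ⟨u, hu1⟩ := Set.ncard_eq_one.mp h1
    have huA : u ∈ A := by
      have : u ∈ A \ {v} := hu1 ▸ rfl
      exact this.1
    have huv : u ≠ v := by
      have : u ∈ A \ {v} := hu1 ▸ rfl
      exact this.2
    have hAeq : ∀ x ∈ A, x = v ∨ x = u := by
      intro x hx
      by_cases h : x = v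
      · left; exact h
      · right
        have : x ∈ A \ {v} := ⟨hx, h⟩
        rw [hu1] at this; exact this
    by_cases hvA' : v ∈ A'
    · by_cases huA' : u ∈ A'
      · -- twins
        apply htwin u huv
        intro x hxv hxu
        have hxB : x ∈ B := by
          rcases hmem x with h | h
          · rcases hAeq x h with rfl | rfl
            · exact absurd rfl hxv
            · exact absurd rfl hxu
          · exact h
        have e1 : G.Adj x v ↔ (v ∈ A' ∧ x ∈ B') := by
          rw [SimpleGraph.adj_comm]; exact hadj v hvA x hxB
        have e2 : G.Adj x u ↔ (u ∈ A' ∧ x ∈ B') := by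
          rw [SimpleGraph.adj_comm]; exact hadj u huA x hxB
        rw [e1, e2]; simp [hvA', huA']
      · -- u isolated in G \ v
        apply not_prime_of_isolated (deleteVert G v) ⟨u, huv⟩ ?_ ?_ hdel
        · rintro ⟨y, hyv⟩ hadj'
          have hgy : G.Adj u y := by simpa [deleteVert] using hadj'
          have hyu : y ≠ u := fun h => (h ▸ hgy).ne' rfl
          have hyB : y ∈ B := by
            rcases hmem y with h | h
            · rcases hAeq y h with rfl | rfl
              · exact absurd rfl hyv
              · exact absurd rfl hyu
            · exact h
          have := (hadj u huA y hyB).mp hgy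
          exact huA' this.1
        · have h2 := Set.ncard_add_ncard_compl ({v} : Set V)
          rw [Set.ncard_singleton] at h2
          have h3 : Nat.card {x : V // x ≠ v} = Set.ncard ({v}ᶜ : Set V) := by
            rw [← Nat.card_coe_set_eq]
            exact Nat.card_congr (Equiv.subtypeEquivRight (by simp))
          omega
    · -- v has at most one neighbor
      have : G.neighborSet v ⊆ {u} := by
        intro w hw
        have hwadj : G.Adj v w := hw
        rcases hmem w with h | h
        · rcases hAeq w h with rfl | rfl
          · exact absurd rfl hwadj.ne'
          · rfl
        · have := (hadj v hvA w h).mp hwadj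
          exact absurd this.1 hvA'
      have := Set.ncard_le_ncard this (Set.finite_singleton u)
      rw [Set.ncard_singleton] at this
      omega

/-- If G has at least 5 vertices, v is a vertex of degree at least 2 such that
G ∖ v is prime and v has no twin in G, then G is prime. -/
theorem prime_of_deleteVert_prime {V : Type*} [Finite V] (G : SimpleGraph V)
    (hcard : 5 ≤ Nat.card V) (v : V) (hdeg : 2 ≤ (G.neighborSet v).ncard)
    (hdel : IsPrime (deleteVert G v))
    (htwin : ∀ u, u ≠ v → ¬ Twins G v u) :
    IsPrime G := by
  rintro ⟨A, B, hs⟩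
  have hmem : v ∈ A ∪ B := by rw [hs.1]; trivial
  rcases hmem with h | h
  · exact no_split_v_mem G hcard v hdeg hdel htwin A B hs h
  · exact no_split_v_mem G hcard v hdeg hdel htwin B A (isSplit_symm hs) h
end

section
/- The graph θ(ℓ_1, ..., ℓ_m) with m ≥ 2 and at least 5 vertices is prime if and only if at most one of the lengths ℓ_i equals 2. -/
variable {V : Type*}

/-- Underlying relation of the theta graph: two hub vertices `none` and `some none`,
joined by m internally disjoint paths, the i-th of length ℓ i, with internal vertices
`some (some ⟨i, j⟩)` for j = 0, …, ℓ i − 2. -/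
def thetaRel (m : ℕ) (ℓ : Fin m → ℕ) :
    Option (Option ((i : Fin m) × Fin (ℓ i - 1))) →
      Option (Option ((i : Fin m) × Fin (ℓ i - 1))) → Prop
  | none, some none => ∃ i, ℓ i = 1
  | none, some (some p) => (p.2 : ℕ) = 0
  | some (some p), some none => (p.2 : ℕ) = ℓ p.1 - 2
  | some (some p), some (some q) => p.1 = q.1 ∧ (q.2 : ℕ) = (p.2 : ℕ) + 1
  | _, _ => False

/-- The graph θ(ℓ 0, …, ℓ (m−1)): two specified vertices joined by m internally
disjoint paths of lengths ℓ 0, …, ℓ (m−1). -/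
def thetaGraph (m : ℕ) (ℓ : Fin m → ℕ) :
    SimpleGraph (Option (Option ((i : Fin m) × Fin (ℓ i - 1)))) :=
  SimpleGraph.fromRel (thetaRel m ℓ)

/-!
If two paths have length 2, their middle vertices are twins, and a pair of twins is one side of a
split. Conversely, θ is 2-connected, so in a split `(A, B)` with frontiers `A' ⊆ A`, `B' ⊆ B` both
frontiers have two vertices, and every vertex of `A'` is adjacent to every vertex of `B'`. Two
internal vertices have at most one common neighbour unless both lie on paths of length 2, so each
frontier contains a hub, say `x ∈ A'` and `y ∈ B'`. The other frontier vertices `u ∈ A'`, `w ∈ B'`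
then form a path `x w u y` of length 3. With at least 5 vertices there is another path with an
internal vertex; its internal vertices are adjacent to neither frontier, so the route from `x` to
`y` along it never crosses from `A` to `B`.
-/

section Split

variable {G : SimpleGraph V}

structure IsSplitWith (G : SimpleGraph V) (A B A' B' : Set V) : Prop where
  union_eq_univ : A ∪ B = Set.univ
  disjoint : Disjoint A B
  two_le_ncard_left : 2 ≤ A.ncard
  two_le_ncard_right : 2 ≤ B.ncard
  subset_left : A' ⊆ A
  subset_right : B' ⊆ B
  adj_iff : ∀ a ∈ A, ∀ b ∈ B, G.Adj a b ↔ a ∈ A' ∧ b ∈ B'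

theorem isSplit_iff_exists_isSplitWith {A B : Set V} :
    IsSplit G A B ↔ ∃ A' B', IsSplitWith G A B A' B' := by
  constructor
  · rintro ⟨hU, hd, hA, hB, A', B', hA', hB', hadj⟩
    exact ⟨A', B', hU, hd, hA, hB, hA', hB', hadj⟩
  · rintro ⟨A', B', hU, hd, hA, hB, hA', hB', hadj⟩
    exact ⟨hU, hd, hA, hB, A', B', hA', hB', hadj⟩

namespace IsSplitWith

variable {A B A' B' : Set V}

theorem symm (h : IsSplitWith G A B A' B') : IsSplitWith G B A B' A' where
  union_eq_univ := Set.union_comm A B ▸ h.union_eq_univ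
  disjoint := h.disjoint.symm
  two_le_ncard_left := h.two_le_ncard_right
  two_le_ncard_right := h.two_le_ncard_left
  subset_left := h.subset_right
  subset_right := h.subset_left
  adj_iff b hb a ha := by rw [G.adj_comm, h.adj_iff a ha b hb, and_comm]

theorem adj (h : IsSplitWith G A B A' B') {a b : V} (ha : a ∈ A') (hb : b ∈ B') : G.Adj a b :=
  (h.adj_iff a (h.subset_left ha) b (h.subset_right hb)).2 ⟨ha, hb⟩

theorem ne (h : IsSplitWith G A B A' B') {a b : V} (ha : a ∈ A') (hb : b ∈ B') : a ≠ b :=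
  (h.adj ha hb).ne

theorem mem_right_of_notMem_left (h : IsSplitWith G A B A' B') {v : V} (hv : v ∉ A) : v ∈ B :=
  (h.union_eq_univ ▸ Set.mem_univ v : v ∈ A ∪ B).resolve_left hv

theorem exists_mem_frontiers_of_reachable (h : IsSplitWith G A B A' B') {S : Set V} {s t : S}
    (hst : (G.induce S).Reachable s t) (hs : s.1 ∈ A) (ht : t.1 ∉ A) :
    ∃ a ∈ S, ∃ b ∈ S, a ∈ A' ∧ b ∈ B' := by
  obtain ⟨p⟩ := hst
  obtain ⟨d, -, hd₁, hd₂⟩ := p.exists_boundary_dart {v | v.1 ∈ A} hs ht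
  exact ⟨d.fst, d.fst.2, d.snd, d.snd.2,
    (h.adj_iff _ hd₁ _ (h.mem_right_of_notMem_left hd₂)).1 d.adj⟩

theorem nontrivial_frontier_left (h : IsSplitWith G A B A' B')
    (hG : ∀ v, (deleteVert G v).Preconnected) : A'.Nontrivial := by
  have hA : A.Nontrivial := (Set.one_lt_ncard_iff_nontrivial_and_finite.1 h.two_le_ncard_left).1
  obtain ⟨b, hb⟩ := Set.nonempty_of_ncard_ne_zero (s := B) (by have := h.two_le_ncard_right; omega)
  -- otherwise deleting the vertex of `A'` leaves no edge between `A` and `B`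
  by_contra hA'
  obtain ⟨a, ha, hA'a⟩ : ∃ a ∈ A, A' ⊆ {a} := by
    rcases A'.eq_empty_or_nonempty with hempty | ⟨a, ha⟩
    · obtain ⟨a, ha⟩ := hA.nonempty
      exact ⟨a, ha, hempty ▸ Set.empty_subset _⟩
    · exact ⟨a, h.subset_left ha, fun c hc => Set.not_nontrivial_iff.1 hA' hc ha⟩
  obtain ⟨u, hu, hua⟩ := hA.exists_ne a
  have hba : b ≠ a := by
    rintro rfl
    exact Set.disjoint_left.1 h.disjoint ha hb
  obtain ⟨c, hca, -, -, hc, -⟩ := h.exists_mem_frontiers_of_reachable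
    (hG a ⟨u, hua⟩ ⟨b, hba⟩) hu (Set.disjoint_right.1 h.disjoint hb)
  exact hca (hA'a hc)

end IsSplitWith

theorem Twins.isSplitWith [Finite V] {u w : V} (h : Twins G u w) (huw : u ≠ w)
    (hV : 4 ≤ Nat.card V) :
    IsSplitWith G {u, w} {u, w}ᶜ {u, w} (G.neighborSet u \ {u, w}) where
  union_eq_univ := Set.union_compl_self _
  disjoint := disjoint_compl_right
  two_le_ncard_left := (Set.ncard_pair huw).ge
  two_le_ncard_right := by
    have := Set.ncard_add_ncard_compl ({u, w} : Set V)
    rw [Set.ncard_pair huw] at this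
    omega
  subset_left := subset_rfl
  subset_right := Set.sdiff_subset_compl _ _
  adj_iff := by
    rintro a ha b hb
    have hbu : b ≠ u := fun e => hb (e ▸ Set.mem_insert u {w})
    have hbw : b ≠ w := fun e => hb (e ▸ Set.mem_insert_of_mem u rfl)
    rcases ha with rfl | rfl
    · simp [hbu, hbw]
    · simp [hbu, hbw, G.adj_comm a b, ← h b hbu hbw, G.adj_comm u b]

end Split

namespace thetaGraph

variable {m : ℕ} {ℓ : Fin m → ℕ}

abbrev x : Option (Option ((i : Fin m) × Fin (ℓ i - 1))) := none

abbrev y : Option (Option ((i : Fin m) × Fin (ℓ i - 1))) := some none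

abbrev pathVert (i : Fin m) (j : Fin (ℓ i - 1)) : Option (Option ((i : Fin m) × Fin (ℓ i - 1))) :=
  some (some ⟨i, j⟩)

@[simp] theorem pathVert_inj {i i' : Fin m} {j : Fin (ℓ i - 1)} {j' : Fin (ℓ i' - 1)} :
    pathVert i j = pathVert i' j' ↔ i = i' ∧ (j : ℕ) = j' := by
  constructor
  · rintro ⟨⟩
    exact ⟨rfl, rfl⟩
  · rintro ⟨rfl, h⟩
    rw [Fin.ext h]

theorem exists_eq_pathVert {v : Option (Option ((i : Fin m) × Fin (ℓ i - 1)))} (hx : v ≠ x)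
    (hy : v ≠ y) : ∃ i j, v = pathVert i j := by
  rcases v with _ | _ | ⟨i, j⟩
  · exact absurd rfl hx
  · exact absurd rfl hy
  · exact ⟨i, j, rfl⟩

@[simp] theorem adj_x_y : (thetaGraph m ℓ).Adj x y ↔ ∃ i, ℓ i = 1 := by
  simp [thetaGraph, thetaRel]

@[simp] theorem adj_x_pathVert {i j} : (thetaGraph m ℓ).Adj x (pathVert i j) ↔ (j : ℕ) = 0 := by
  simp [thetaGraph, thetaRel]

@[simp] theorem adj_y_pathVert {i j} :
    (thetaGraph m ℓ).Adj y (pathVert i j) ↔ (j : ℕ) = ℓ i - 2 := by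
  simp [thetaGraph, thetaRel]

@[simp] theorem adj_pathVert_x {i j} : (thetaGraph m ℓ).Adj (pathVert i j) x ↔ (j : ℕ) = 0 := by
  rw [SimpleGraph.adj_comm, adj_x_pathVert]

@[simp] theorem adj_pathVert_y {i j} :
    (thetaGraph m ℓ).Adj (pathVert i j) y ↔ (j : ℕ) = ℓ i - 2 := by
  rw [SimpleGraph.adj_comm, adj_y_pathVert]

@[simp] theorem adj_pathVert_pathVert {i i' : Fin m} {j : Fin (ℓ i - 1)} {j' : Fin (ℓ i' - 1)} :
    (thetaGraph m ℓ).Adj (pathVert i j) (pathVert i' j') ↔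
      i = i' ∧ ((j' : ℕ) = j + 1 ∨ (j : ℕ) = j' + 1) := by
  simp only [thetaGraph, SimpleGraph.fromRel_adj, thetaRel, ne_eq, pathVert_inj]
  constructor
  · rintro ⟨-, ⟨rfl, h⟩ | ⟨rfl, h⟩⟩ <;> simp [h]
  · rintro ⟨rfl, h⟩
    exact ⟨fun _ => by omega, by simpa using h⟩

section Reachable

variable {S : Set (Option (Option ((i : Fin m) × Fin (ℓ i - 1))))}

theorem reachable_x_pathVert (hx : x ∈ S) {i : Fin m} (j : Fin (ℓ i - 1))
    (hS : ∀ j' ≤ j, pathVert i j' ∈ S) :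
    ((thetaGraph m ℓ).induce S).Reachable ⟨x, hx⟩ ⟨pathVert i j, hS j le_rfl⟩ := by
  obtain ⟨n, hn⟩ := j
  induction n with
  | zero => exact SimpleGraph.Adj.reachable (by simp)
  | succ n ih =>
    exact (ih (by omega) fun j' hj' => hS j' (le_trans hj' (by simp))).trans
      (SimpleGraph.Adj.reachable (by simp))

theorem reachable_pathVert_y (hy : y ∈ S) {i : Fin m} (j : Fin (ℓ i - 1))
    (hS : ∀ j' ≥ j, pathVert i j' ∈ S) :
    ((thetaGraph m ℓ).induce S).Reachable ⟨pathVert i j, hS j le_rfl⟩ ⟨y, hy⟩ := by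
  obtain ⟨n, hn⟩ := j
  induction h : ℓ i - 2 - n generalizing n with
  | zero =>
    exact SimpleGraph.Adj.reachable (by simp only [SimpleGraph.induce_adj, adj_pathVert_y]; omega)
  | succ d ih =>
    exact (SimpleGraph.Adj.reachable (by simp)).trans
      (ih (n + 1) (by omega) (fun j' hj' => hS j' (le_trans (by simp) hj')) (by omega))

theorem reachable_x_y (hx : x ∈ S) (hy : y ∈ S) {i : Fin m} (hi : 1 ≤ ℓ i)
    (hS : ∀ j, pathVert i j ∈ S) :
    ((thetaGraph m ℓ).induce S).Reachable ⟨x, hx⟩ ⟨y, hy⟩ := by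
  rcases hi.eq_or_lt with hi | hi
  · exact SimpleGraph.Adj.reachable (by simpa using ⟨i, hi.symm⟩)
  · let j₀ : Fin (ℓ i - 1) := ⟨0, by omega⟩
    exact (reachable_x_pathVert hx j₀ fun j _ => hS j).trans
      (reachable_pathVert_y hy j₀ fun j _ => hS j)

end Reachable

theorem preconnected_deleteVert (hm : 2 ≤ m) (hpos : ∀ i, 1 ≤ ℓ i)
    (a : Option (Option ((i : Fin m) × Fin (ℓ i - 1)))) :
    (deleteVert (thetaGraph m ℓ) a).Preconnected := by
  suffices ∃ c, ∀ s, (deleteVert (thetaGraph m ℓ) a).Reachable s c by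
    obtain ⟨c, hc⟩ := this
    exact fun s t => (hc s).trans (hc t).symm
  unfold deleteVert
  rcases a with _ | _ | ⟨i₀, j₀⟩
  · refine ⟨⟨y, by simp⟩, ?_⟩
    rintro ⟨_ | _ | ⟨i, j⟩, hs⟩
    · exact absurd rfl hs
    · rfl
    · exact reachable_pathVert_y _ j (by simp)
  · refine ⟨⟨x, by simp⟩, ?_⟩
    rintro ⟨_ | _ | ⟨i, j⟩, hs⟩
    · rfl
    · exact absurd rfl hs
    · exact (reachable_x_pathVert _ j (by simp)).symm
  · obtain ⟨i', hi'⟩ := Fintype.exists_ne_of_one_lt_card (by simp; omega) i₀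
    have hxy := reachable_x_y (S := {v | v ≠ pathVert i₀ j₀}) (by simp) (by simp) (hpos i')
      (by simp [hi'])
    refine ⟨⟨x, by simp⟩, ?_⟩
    rintro ⟨_ | _ | ⟨i, j⟩, hs⟩
    · rfl
    · exact hxy.symm
    -- if `a` lies between `x` and `s` on path `i`, leave towards `y` instead
    · by_cases hbetween : i = i₀ ∧ (j₀ : ℕ) < j
      · have hS : ∀ j' ≥ j, pathVert i j' ∈ {v | v ≠ pathVert i₀ j₀} := by
          intro j' hj'
          rw [ge_iff_le, Fin.le_def] at hj'
          simp only [Set.mem_ofPred_eq, ne_eq, pathVert_inj]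
          omega
        exact (reachable_pathVert_y _ j hS).trans hxy.symm
      · have hS : ∀ j' ≤ j, pathVert i j' ∈ {v | v ≠ pathVert i₀ j₀} := by
          intro j' hj'
          rw [Fin.le_def] at hj'
          simp only [Set.mem_ofPred_eq, ne_eq, pathVert_inj] at hs ⊢
          omega
        exact (reachable_x_pathVert _ j hS).symm

theorem twins_pathVert {i i' : Fin m} (hi : ℓ i = 2) (hi' : ℓ i' = 2) (j : Fin (ℓ i - 1))
    (j' : Fin (ℓ i' - 1)) : Twins (thetaGraph m ℓ) (pathVert i j) (pathVert i' j') := by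
  have := j.isLt
  have := j'.isLt
  rintro (_ | _ | ⟨k, n⟩) - - <;>
    simp only [adj_x_pathVert, adj_y_pathVert, adj_pathVert_pathVert]
  · omega
  · omega
  · have := n.isLt
    constructor <;> rintro ⟨rfl, h⟩ <;> omega

theorem pathVert_eq_of_nontrivial_commonNeighbors (h2 : ∀ i j, ℓ i = 2 → ℓ j = 2 → i = j)
    {i i' : Fin m} {j : Fin (ℓ i - 1)} {j' : Fin (ℓ i' - 1)}
    (h : ((thetaGraph m ℓ).commonNeighbors (pathVert i j) (pathVert i' j')).Nontrivial) :
    i = i' ∧ (j : ℕ) = j' := by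
  obtain ⟨b₁, hb₁, b₂, hb₂, hb⟩ := h
  rw [SimpleGraph.mem_commonNeighbors] at hb₁ hb₂
  have := j.isLt
  have := j'.isLt
  -- vertices on different paths share only hubs as neighbours, and sharing both hubs forces
  -- both paths to have length 2
  have hii' : i = i' := by
    by_contra hii'
    rcases b₁ with _ | _ | ⟨k₁, n₁⟩ <;> rcases b₂ with _ | _ | ⟨k₂, n₂⟩ <;>
      simp only [adj_pathVert_x, adj_pathVert_y, adj_pathVert_pathVert, ne_eq, pathVert_inj]
        at hb₁ hb₂ hb <;> grind
  subst hii'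
  refine ⟨rfl, ?_⟩
  rcases b₁ with _ | _ | ⟨k₁, n₁⟩ <;> rcases b₂ with _ | _ | ⟨k₂, n₂⟩ <;>
    simp only [adj_pathVert_x, adj_pathVert_y, adj_pathVert_pathVert, ne_eq, pathVert_inj]
      at hb₁ hb₂ hb <;> grind

variable {A B A' B' : Set (Option (Option ((i : Fin m) × Fin (ℓ i - 1))))}

theorem x_mem_or_y_mem_of_isSplitWith (h2 : ∀ i j, ℓ i = 2 → ℓ j = 2 → i = j)
    (h : IsSplitWith (thetaGraph m ℓ) A B A' B') (hA' : A'.Nontrivial) (hB' : B'.Nontrivial) :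
    x ∈ A' ∨ y ∈ A' := by
  by_contra! hxy
  obtain ⟨a₁, ha₁, a₂, ha₂, ha⟩ := hA'
  obtain ⟨i, j, rfl⟩ := exists_eq_pathVert (ne_of_mem_of_not_mem ha₁ hxy.1)
    (ne_of_mem_of_not_mem ha₁ hxy.2)
  obtain ⟨i', j', rfl⟩ := exists_eq_pathVert (ne_of_mem_of_not_mem ha₂ hxy.1)
    (ne_of_mem_of_not_mem ha₂ hxy.2)
  have hcommon : B' ⊆ (thetaGraph m ℓ).commonNeighbors (pathVert i j) (pathVert i' j') :=
    fun b hb => ⟨h.adj ha₁ hb, h.adj ha₂ hb⟩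
  exact ha (pathVert_inj.2 (pathVert_eq_of_nontrivial_commonNeighbors h2 (hB'.mono hcommon)))

theorem exists_length_three_of_isSplitWith (h : IsSplitWith (thetaGraph m ℓ) A B A' B')
    (hA' : A'.Nontrivial) (hB' : B'.Nontrivial) (hx : x ∈ A') (hy : y ∈ B') :
    ∃ i, ℓ i = 3 ∧ (∃ j, pathVert i j ∈ A') ∧ ∃ j, pathVert i j ∈ B' := by
  obtain ⟨u, hu, hux⟩ := hA'.exists_ne x
  obtain ⟨w, hw, hwy⟩ := hB'.exists_ne y
  obtain ⟨i, j, rfl⟩ := exists_eq_pathVert hux (h.ne hu hy)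
  obtain ⟨i', j', rfl⟩ := exists_eq_pathVert (h.ne hx hw).symm hwy
  have huy := h.adj hu hy
  have hxw := h.adj hx hw
  have huw := h.adj hu hw
  simp only [adj_pathVert_y, adj_x_pathVert, adj_pathVert_pathVert] at huy hxw huw
  obtain ⟨rfl, _⟩ := huw
  exact ⟨i, by omega, ⟨j, hu⟩, ⟨j', hw⟩⟩

theorem exists_ne_two_le_of_five_le_card
    (hcard : 5 ≤ Nat.card (Option (Option ((i : Fin m) × Fin (ℓ i - 1))))) {i : Fin m}
    (hi : ℓ i = 3) : ∃ k ≠ i, 2 ≤ ℓ k := by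
  by_contra! hk
  have hsum : ∑ k, (ℓ k - 1) = ℓ i - 1 :=
    Finset.sum_eq_single i (fun k _ hki => by have := hk k hki; omega) (by simp)
  simp only [Nat.card_eq_fintype_card, Fintype.card_option, Fintype.card_sigma, Fintype.card_fin,
    hsum] at hcard
  omega

theorem false_of_isSplitWith_of_x_mem_of_y_mem
    (hcard : 5 ≤ Nat.card (Option (Option ((i : Fin m) × Fin (ℓ i - 1)))))
    (h : IsSplitWith (thetaGraph m ℓ) A B A' B') (hA' : A'.Nontrivial) (hB' : B'.Nontrivial)
    (hx : x ∈ A') (hy : y ∈ B') : False := by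
  obtain ⟨i, hi, ⟨j, hjA⟩, j', hjB⟩ := exists_length_three_of_isSplitWith h hA' hB' hx hy
  obtain ⟨k, hki, hk⟩ := exists_ne_two_le_of_five_le_card hcard hi
  -- no edge across the split meets path `k`, yet the path joins `x ∈ A` to `y ∈ B`
  have hfree : ∀ n, pathVert k n ∉ A' ∧ pathVert k n ∉ B' := fun n =>
    ⟨fun hn => hki (adj_pathVert_pathVert.1 (h.adj hn hjB)).1,
      fun hn => hki (adj_pathVert_pathVert.1 (h.adj hjA hn)).1.symm⟩
  let S := {v | v = x ∨ v ∉ A' ∧ v ∉ B'}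
  let last : Fin (ℓ k - 1) := ⟨ℓ k - 2, by omega⟩
  have hlast : pathVert k last ∈ A := by
    by_contra hlast
    obtain ⟨-, -, b, hbS, -, hb⟩ := h.exists_mem_frontiers_of_reachable
      (reachable_x_pathVert (S := S) (Or.inl rfl) last fun n _ => Or.inr (hfree n))
      (h.subset_left hx) hlast
    rcases hbS with rfl | hbS
    · exact h.ne hx hb rfl
    · exact hbS.2 hb
  exact (hfree last).1 ((h.adj_iff _ hlast y (h.subset_right hy)).1 (by simp [last])).1

end thetaGraph

theorem thetaGraph_prime_iff_general (m : ℕ) (hm : 2 ≤ m) (ℓ : Fin m → ℕ)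
    (hpos : ∀ i, 1 ≤ ℓ i)
    (hcard : 5 ≤ Nat.card (Option (Option ((i : Fin m) × Fin (ℓ i - 1))))) :
    IsPrime (thetaGraph m ℓ) ↔ ∀ i j, ℓ i = 2 → ℓ j = 2 → i = j := by
  open thetaGraph in
  constructor
  · intro hprime i i' hi hi'
    by_contra hii'
    let j : Fin (ℓ i - 1) := ⟨0, by omega⟩
    let j' : Fin (ℓ i' - 1) := ⟨0, by omega⟩
    have hne : pathVert i j ≠ pathVert i' j' := by simp [hii']
    exact hprime ⟨_, _, isSplit_iff_exists_isSplitWith.2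
      ⟨_, _, (twins_pathVert hi hi' j j').isSplitWith hne (by omega)⟩⟩
  · rintro h2 ⟨A, B, hsplit⟩
    obtain ⟨A', B', h⟩ := isSplit_iff_exists_isSplitWith.1 hsplit
    have hA' := h.nontrivial_frontier_left (preconnected_deleteVert hm hpos)
    have hB' := h.symm.nontrivial_frontier_left (preconnected_deleteVert hm hpos)
    rcases x_mem_or_y_mem_of_isSplitWith h2 h hA' hB' with hxA | hyA <;>
      rcases x_mem_or_y_mem_of_isSplitWith h2 h.symm hB' hA' with hxB | hyB
    · exact h.ne hxA hxB rfl
    · exact false_of_isSplitWith_of_x_mem_of_y_mem hcard h hA' hB' hxA hyB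
    · exact false_of_isSplitWith_of_x_mem_of_y_mem hcard h.symm hB' hA' hxB hyA
    · exact h.ne hyA hyB rfl

/-- θ(ℓ_1, …, ℓ_m) with m ≥ 2 and at least 5 vertices is prime iff at most one
of the lengths ℓ_i equals 2 (lengths are positive, with at most one equal to 1). -/
theorem thetaGraph_prime_iff (m : ℕ) (hm : 2 ≤ m) (ℓ : Fin m → ℕ)
    (hpos : ∀ i, 1 ≤ ℓ i) (hone : ∀ i j, ℓ i = 1 → ℓ j = 1 → i = j)
    (hcard : 5 ≤ Nat.card (Option (Option ((i : Fin m) × Fin (ℓ i - 1))))) :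
    IsPrime (thetaGraph m ℓ) ↔ ∀ i j, ℓ i = 2 → ℓ j = 2 → i = j :=
  thetaGraph_prime_iff_general m hm ℓ hpos hcard
end
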